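/- Let M(z) = c(z - α)/(1 - \bar{α}z) be a Möbius transformation of the disc, M ≠ id, and B(z) = z ∏_{k=1}^{n-1} (z - a_k)/(1 - \bar{a_k}z) a canonical Blaschke product of degree n with distinct nonzero zeros. If B ∘ M = B, then there exist zeros a_j, a_l of B with |a_j| = |a_l|, c = -a_j/a_l, α = a_l, and M^{n-1}(0) equals one of the nonzero zeros a_i of B. -/

import Mathlib

/-!
The zeros of `B` in the disc are `0` and the `a_k`, all simple, so `M` permutes them. If a disc
automorphism `f` with `B ∘ f = B` fixes a simple zero `x` of `B`, the chain rule gives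
`f'(x) = 1`, and an automorphism of the disc fixing `x` with derivative `1` there is the identity.
Hence `M 0 = -c α` is a zero `a_j ≠ 0`, and the zero mapped to `0` is `α = a_l`. Iterates of `M`
are again disc automorphisms, so `⟨M⟩` acts freely on the `n` zeros: its order divides `n`, and if
`M^[n-1] 0 = 0` it also divides `n - 1`, forcing `M = id`.
-/

open Set Function Complex ComplexConjugate Metric Topology

theorem Equiv.Perm.orderOf_dvd_card_of_free {X : Type*} [Finite X] (σ : Equiv.Perm X)
    (hfree : ∀ (k : ℕ) (x : X), (σ ^ k) x = x → σ ^ k = 1) : orderOf σ ∣ Nat.card X := by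
  have hstab : ∀ x : X, MulAction.stabilizer (Subgroup.zpowers σ) x = ⊥ := by
    intro x
    refine (Subgroup.eq_bot_iff_forall _).2 fun ⟨g, hg⟩ hgx => ?_
    obtain ⟨k, rfl⟩ := mem_powers_iff_mem_zpowers.2 hg
    exact Subtype.ext (hfree k x hgx)
  rw [Nat.card_congr (MulAction.selfEquivOrbitsQuotientProd hstab), Nat.card_prod,
    Nat.card_zpowers]
  exact dvd_mul_left _ _

theorem apply_eq_of_iterate_card_sub_one_eq {α : Type*} {f : α → α} {T : Finset α}
    (hmaps : MapsTo f T T) (hinj : InjOn f T)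
    (hfree : ∀ k : ℕ, ∀ x ∈ T, f^[k] x = x → ∀ y ∈ T, f^[k] y = y)
    {x : α} (hx : x ∈ T) (hfix : f^[T.card - 1] x = x) : f x = x := by
  let σ : Equiv.Perm T :=
    Equiv.ofBijective _ (Finite.injective_iff_bijective.1 (hmaps.restrict_inj.2 hinj))
  have hσ : ∀ (k : ℕ) (y : T), ((σ ^ k) y : α) = f^[k] y := fun k y => by
    rw [Equiv.Perm.coe_pow]
    exact congrArg Subtype.val (congrFun (hmaps.iterate_restrict k) y)
  have hσfree : ∀ (k : ℕ) (y : T), (σ ^ k) y = y → σ ^ k = 1 := fun k y hy =>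
    Equiv.ext fun z => Subtype.ext <| by
      rw [hσ]
      exact hfree k y y.2 (by rw [← hσ, hy]) z z.2
  have hpow : σ ^ (T.card - 1) = 1 := hσfree _ ⟨x, hx⟩ (Subtype.ext (by rw [hσ]; exact hfix))
  have hdvd : orderOf σ ∣ 1 := by
    have h := Nat.dvd_sub (σ.orderOf_dvd_card_of_free hσfree) (orderOf_dvd_of_pow_eq_one hpow)
    rwa [Nat.card_eq_finsetCard, Nat.sub_sub_self (Finset.card_pos.2 ⟨x, hx⟩)] at h
  have hσ1 : σ = 1 := orderOf_eq_one_iff.1 (Nat.dvd_one.1 hdvd)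
  simpa [hσ1] using (hσ 1 ⟨x, hx⟩).symm

theorem eqOn_comp_iterate {α β : Type*} {f : α → α} {B : α → β} {s : Set α} (hf : MapsTo f s s)
    (hB : EqOn (B ∘ f) B s) : ∀ k : ℕ, EqOn (B ∘ f^[k]) B s
  | 0 => fun _ _ => rfl
  | k + 1 => fun _ hz => (eqOn_comp_iterate hf hB k (hf hz)).trans (hB hz)

theorem eq_one_of_hasDerivAt_comp_eq {𝕜 : Type*} [NontriviallyNormedField 𝕜] {f B : 𝕜 → 𝕜}
    {x f' b : 𝕜} (hf : HasDerivAt f f' x) (hfix : f x = x) (hB : HasDerivAt B b x) (hb : b ≠ 0)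
    (hBf : B ∘ f =ᶠ[𝓝 x] B) : f' = 1 := by
  have hcomp : HasDerivAt (B ∘ f) (b * f') x := (hfix ▸ hB).comp x hf
  exact mul_left_cancel₀ hb ((hcomp.unique (hB.congr_of_eventuallyEq hBf)).trans (mul_one b).symm)

theorem normSq_lt_normSq_iff {z w : ℂ} : normSq z < normSq w ↔ ‖z‖ < ‖w‖ := by
  rw [← Complex.sq_norm, ← Complex.sq_norm]
  exact sq_lt_sq₀ (norm_nonneg z) (norm_nonneg w)

/-- The Möbius map of the matrix `!![p, q; conj q, conj p]`, so that composition corresponds to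
matrix multiplication; for `‖q‖ < ‖p‖` it is an automorphism of the unit disc. -/
noncomputable def discMobius (p q z : ℂ) : ℂ := (p * z + q) / (conj q * z + conj p)

section DiscMobius

variable {p q z : ℂ}

theorem normSq_discMobius_den_sub_num (p q z : ℂ) :
    normSq (conj q * z + conj p) - normSq (p * z + q)
      = (normSq p - normSq q) * (1 - normSq z) := by
  apply Complex.ofReal_injective
  push_cast
  simp only [← Complex.mul_conj, map_add, map_mul, Complex.conj_conj]
  ring

theorem discMobius_den_ne_zero (hpq : ‖q‖ < ‖p‖) (hz : ‖z‖ ≤ 1) : conj q * z + conj p ≠ 0 := by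
  intro h
  have : ‖conj p‖ = ‖conj q * z‖ := by rw [eq_neg_of_add_eq_zero_right h, norm_neg]
  rw [norm_mul, Complex.norm_conj, Complex.norm_conj] at this
  nlinarith [norm_nonneg q]

theorem norm_discMobius_lt_one (hpq : ‖q‖ < ‖p‖) (hz : ‖z‖ < 1) : ‖discMobius p q z‖ < 1 := by
  have hden := discMobius_den_ne_zero hpq hz.le
  have hz' : normSq z < 1 := by
    simpa using normSq_lt_normSq_iff.2 (by rwa [norm_one] : ‖z‖ < ‖(1 : ℂ)‖)
  rw [discMobius, norm_div, div_lt_one (norm_pos_iff.2 hden), ← normSq_lt_normSq_iff,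
    ← sub_pos, normSq_discMobius_den_sub_num]
  exact mul_pos (sub_pos.2 (normSq_lt_normSq_iff.2 hpq)) (sub_pos.2 hz')

theorem normSq_sub_normSq_discMobius_comp (p₁ q₁ p₂ q₂ : ℂ) :
    normSq (p₁ * p₂ + q₁ * conj q₂) - normSq (p₁ * q₂ + q₁ * conj p₂)
      = (normSq p₁ - normSq q₁) * (normSq p₂ - normSq q₂) := by
  apply Complex.ofReal_injective
  push_cast
  simp only [← Complex.mul_conj, map_add, map_mul, Complex.conj_conj]
  ring

theorem norm_lt_norm_discMobius_comp {p₁ q₁ p₂ q₂ : ℂ} (h₁ : ‖q₁‖ < ‖p₁‖) (h₂ : ‖q₂‖ < ‖p₂‖) :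
    ‖p₁ * q₂ + q₁ * conj p₂‖ < ‖p₁ * p₂ + q₁ * conj q₂‖ := by
  rw [← normSq_lt_normSq_iff, ← sub_pos, normSq_sub_normSq_discMobius_comp]
  rw [← normSq_lt_normSq_iff] at h₁ h₂
  exact mul_pos (sub_pos.2 h₁) (sub_pos.2 h₂)

theorem discMobius_discMobius {p₁ q₁ p₂ q₂ : ℂ} (h₂ : ‖q₂‖ < ‖p₂‖) (hz : ‖z‖ < 1) :
    discMobius p₁ q₁ (discMobius p₂ q₂ z)
      = discMobius (p₁ * p₂ + q₁ * conj q₂) (p₁ * q₂ + q₁ * conj p₂) z := by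
  have hd := discMobius_den_ne_zero h₂ hz.le
  have hnum : p₁ * ((p₂ * z + q₂) / (conj q₂ * z + conj p₂)) + q₁
      = ((p₁ * p₂ + q₁ * conj q₂) * z + (p₁ * q₂ + q₁ * conj p₂)) / (conj q₂ * z + conj p₂) := by
    rw [mul_div_assoc', div_add' _ _ _ hd]
    ring
  have hden : conj q₁ * ((p₂ * z + q₂) / (conj q₂ * z + conj p₂)) + conj p₁
      = (conj (p₁ * q₂ + q₁ * conj p₂) * z + conj (p₁ * p₂ + q₁ * conj q₂))
        / (conj q₂ * z + conj p₂) := by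
    rw [mul_div_assoc', div_add' _ _ _ hd]
    simp only [map_add, map_mul, Complex.conj_conj]
    ring
  rw [discMobius, discMobius, discMobius, hnum, hden, div_div_div_cancel_right₀ hd]

theorem discMobius_conj_neg_discMobius (hpq : ‖q‖ < ‖p‖) (hz : ‖z‖ < 1) :
    discMobius (conj p) (-q) (discMobius p q z) = z := by
  have hD : p * conj p - conj q * q ≠ 0 := by
    rw [mul_comm (conj q), Complex.mul_conj, Complex.mul_conj, ← ofReal_sub]
    exact ofReal_ne_zero.2 (sub_pos.2 (normSq_lt_normSq_iff.2 hpq)).ne'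
  rw [discMobius_discMobius hpq hz, discMobius]
  simp only [map_add, map_mul, map_neg, Complex.conj_conj]
  rw [div_eq_iff (by convert hD using 1; ring)]
  ring

theorem hasDerivAt_discMobius (hpq : ‖q‖ < ‖p‖) (hz : ‖z‖ ≤ 1) :
    HasDerivAt (discMobius p q) ((p * conj p - q * conj q) / (conj q * z + conj p) ^ 2) z := by
  have h : HasDerivAt (discMobius p q) _ z := (((hasDerivAt_id z).const_mul p).add_const q).div
    (((hasDerivAt_id z).const_mul (conj q)).add_const (conj p)) (discMobius_den_ne_zero hpq hz)
  exact h.congr_deriv (by simp only [id]; ring)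

theorem eq_zero_and_conj_eq_of_discMobius_eq_of_deriv_eq_one {x : ℂ} (hx : ‖x‖ < 1)
    (hd : conj q * x + conj p ≠ 0) (hfix : discMobius p q x = x)
    (hderiv : (p * conj p - q * conj q) / (conj q * x + conj p) ^ 2 = 1) :
    q = 0 ∧ conj p = p := by
  rw [discMobius, div_eq_iff hd] at hfix
  rw [div_eq_one_iff_eq (pow_ne_zero 2 hd)] at hderiv
  -- The denominator at `x` is `Re p`; comparing `|p|² - |q|²` with `(Re p)²` gives `|q| = |q| |x|`.
  have hre : 2 * (conj q * x + conj p) = p + conj p := by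
    refine mul_left_cancel₀ hd ?_
    linear_combination -(conj q) * hfix - hderiv
  have hs : p - conj p = 2 * conj q * x := by linear_combination -hre
  have hqx : q * conj q = -(conj q * x) ^ 2 := by
    linear_combination (-(4 * conj q * x + (p - conj p - 2 * conj q * x)) / 4) * hs
      - ((2 * (conj q * x + conj p) + p + conj p) / 4) * hre - hderiv
  have hnorm : ‖q‖ ^ 2 * (1 - ‖x‖ ^ 2) = 0 := by
    have := congrArg norm hqx
    simp only [norm_mul, norm_neg, norm_pow, Complex.norm_conj] at this
    linear_combination this
  have hq : q = 0 := by
    have hx2 : 1 - ‖x‖ ^ 2 ≠ 0 := by nlinarith [norm_nonneg x]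
    simpa [hx2] using hnorm
  subst hq
  simp only [map_zero, mul_zero, zero_mul] at hs
  exact ⟨rfl, (sub_eq_zero.1 hs).symm⟩

theorem discMobius_zero_of_conj_eq (hp : p ≠ 0) (hpp : conj p = p) (z : ℂ) :
    discMobius p 0 z = z := by
  rw [discMobius, map_zero, zero_mul, zero_add, add_zero, hpp, mul_div_cancel_left₀ z hp]

end DiscMobius

def IsDiscMobius (f : ℂ → ℂ) : Prop :=
  ∃ p q : ℂ, ‖q‖ < ‖p‖ ∧ EqOn f (discMobius p q) (ball 0 1)

namespace IsDiscMobius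

variable {f g : ℂ → ℂ}

theorem mapsTo (hf : IsDiscMobius f) : MapsTo f (ball 0 1) (ball 0 1) := by
  obtain ⟨p, q, hpq, hf⟩ := hf
  intro z hz
  rw [mem_ball_zero_iff] at hz ⊢
  rw [hf (mem_ball_zero_iff.2 hz)]
  exact norm_discMobius_lt_one hpq hz

theorem comp (hf : IsDiscMobius f) (hg : IsDiscMobius g) : IsDiscMobius (f ∘ g) := by
  obtain ⟨p₁, q₁, h₁, hf'⟩ := id hf
  obtain ⟨p₂, q₂, h₂, hg'⟩ := id hg
  refine ⟨_, _, norm_lt_norm_discMobius_comp h₁ h₂, fun z hz => ?_⟩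
  rw [comp_apply, hf' (hg.mapsTo hz), hg' hz]
  exact discMobius_discMobius h₂ (mem_ball_zero_iff.1 hz)

theorem iterate (hf : IsDiscMobius f) : ∀ k : ℕ, IsDiscMobius f^[k]
  | 0 => ⟨1, 0, by simp, fun z _ => by simp [discMobius]⟩
  | k + 1 => by rw [iterate_succ']; exact hf.comp (hf.iterate k)

theorem injOn (hf : IsDiscMobius f) : InjOn f (ball 0 1) := by
  obtain ⟨p, q, hpq, hf⟩ := hf
  intro z hz w hw hzw
  rw [← discMobius_conj_neg_discMobius hpq (mem_ball_zero_iff.1 hz),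
    ← discMobius_conj_neg_discMobius hpq (mem_ball_zero_iff.1 hw), ← hf hz, ← hf hw, hzw]

theorem eqOn_id_of_comp_eq_of_hasDerivAt {B : ℂ → ℂ} {x b : ℂ} (hf : IsDiscMobius f)
    (hx : x ∈ ball (0 : ℂ) 1) (hfix : f x = x) (hB : HasDerivAt B b x) (hb : b ≠ 0)
    (hBf : EqOn (B ∘ f) B (ball 0 1)) : EqOn f id (ball 0 1) := by
  obtain ⟨p, q, hpq, hf⟩ := hf
  have hx1 := mem_ball_zero_iff.1 hx
  have hnhds : ball (0 : ℂ) 1 ∈ 𝓝 x := isOpen_ball.mem_nhds hx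
  have hderiv := eq_one_of_hasDerivAt_comp_eq
    ((hasDerivAt_discMobius hpq hx1.le).congr_of_eventuallyEq (Filter.eventuallyEq_of_mem hnhds hf))
    hfix hB hb (Filter.eventuallyEq_of_mem hnhds hBf)
  obtain ⟨rfl, hpp⟩ := eq_zero_and_conj_eq_of_discMobius_eq_of_deriv_eq_one hx1
    (discMobius_den_ne_zero hpq hx1.le) (hf hx ▸ hfix) hderiv
  have hp : p ≠ 0 := norm_pos_iff.1 (by simpa using hpq)
  exact fun z hz => (hf hz).trans (discMobius_zero_of_conj_eq hp hpp z)

end IsDiscMobius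

theorem isDiscMobius_mul_div {c α : ℂ} (hc : ‖c‖ = 1) (hα : ‖α‖ < 1) :
    IsDiscMobius fun z => c * (z - α) / (1 - conj α * z) := by
  -- With `p ^ 2 = c` and `‖p‖ = 1`, `c = p / conj p`.
  obtain ⟨p, hp⟩ := IsAlgClosed.exists_pow_nat_eq c two_pos
  have hp1 : ‖p‖ = 1 := by
    rwa [← hp, norm_pow, pow_eq_one_iff_of_nonneg (norm_nonneg p) two_ne_zero] at hc
  have hpc : p * conj p = 1 := by rw [Complex.mul_conj, ← Complex.sq_norm, hp1]; norm_num
  have hpq : ‖-(p * α)‖ < ‖p‖ := by rwa [norm_neg, norm_mul, hp1, one_mul]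
  refine ⟨p, -(p * α), hpq, fun z hz => ?_⟩
  have hfac : conj (-(p * α)) * z + conj p = conj p * (1 - conj α * z) := by
    simp only [map_neg, map_mul]
    ring
  have hden := discMobius_den_ne_zero hpq (mem_ball_zero_iff.1 hz).le
  rw [hfac] at hden
  rw [discMobius, hfac, ← hp, div_eq_div_iff (right_ne_zero_of_mul hden) hden]
  linear_combination p * (z - α) * (1 - conj α * z) * hpc

section Blaschke

variable {a z : ℂ}

theorem one_sub_conj_mul_ne_zero (ha : ‖a‖ < 1) (hz : ‖z‖ ≤ 1) : 1 - conj a * z ≠ 0 := by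
  intro h
  have h1 : ‖conj a * z‖ < 1 := by
    rw [norm_mul, Complex.norm_conj]
    nlinarith [norm_nonneg a, norm_nonneg z]
  rw [← sub_eq_zero.1 h, norm_one] at h1
  exact lt_irrefl 1 h1

noncomputable def blaschkeFactor (a z : ℂ) : ℂ := (z - a) / (1 - conj a * z)

noncomputable def blaschkeProduct {ι : Type*} [Fintype ι] (b : ι → ℂ) (z : ℂ) : ℂ :=
  ∏ i, blaschkeFactor (b i) z

theorem blaschkeFactor_eq_zero_iff (ha : ‖a‖ < 1) (hz : ‖z‖ ≤ 1) :
    blaschkeFactor a z = 0 ↔ a = z := by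
  rw [blaschkeFactor, div_eq_zero_iff, sub_eq_zero, eq_comm]
  exact or_iff_left (one_sub_conj_mul_ne_zero ha hz)

theorem hasDerivAt_blaschkeFactor (ha : ‖a‖ < 1) (hz : ‖z‖ ≤ 1) :
    HasDerivAt (blaschkeFactor a) ((1 - conj a * a) / (1 - conj a * z) ^ 2) z := by
  have h : HasDerivAt (blaschkeFactor a) _ z :=
    ((hasDerivAt_id z).sub_const a).div (((hasDerivAt_id z).const_mul (conj a)).const_sub 1)
      (one_sub_conj_mul_ne_zero ha hz)
  exact h.congr_deriv (by simp only [id]; ring)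

theorem blaschkeProduct_option_elim {κ : Type*} [Fintype κ] (a : κ → ℂ) (z : ℂ) :
    blaschkeProduct (fun o : Option κ => o.elim 0 a) z = z * ∏ k, blaschkeFactor (a k) z := by
  simp only [blaschkeProduct, Fintype.prod_option, blaschkeFactor, Option.elim, map_zero,
    zero_mul, sub_zero, div_one]

variable {ι : Type*} [Fintype ι] {b : ι → ℂ}

theorem blaschkeProduct_eq_zero_iff (hb : ∀ i, ‖b i‖ < 1) (hz : ‖z‖ ≤ 1) :
    blaschkeProduct b z = 0 ↔ z ∈ range b := by
  simp only [blaschkeProduct, Finset.prod_eq_zero_iff, Finset.mem_univ, true_and, mem_range,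
    blaschkeFactor_eq_zero_iff (hb _) hz]

theorem exists_hasDerivAt_blaschkeProduct_ne_zero [DecidableEq ι] (hb : ∀ i, ‖b i‖ < 1)
    (hbinj : Injective b) (j : ι) : ∃ d ≠ 0, HasDerivAt (blaschkeProduct b) d (b j) := by
  have hsplit : blaschkeProduct b
      = blaschkeFactor (b j) * fun z => ∏ i ∈ Finset.univ.erase j, blaschkeFactor (b i) z :=
    funext fun z => (Finset.mul_prod_erase _ _ (Finset.mem_univ j)).symm
  have hrest : HasDerivAt (fun z => ∏ i ∈ Finset.univ.erase j, blaschkeFactor (b i) z) _ (b j) :=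
    (DifferentiableAt.fun_finsetProd fun i _ =>
      (hasDerivAt_blaschkeFactor (hb i) (hb j).le).differentiableAt).hasDerivAt
  refine ⟨_, ?_, hsplit ▸ (hasDerivAt_blaschkeFactor (hb j) (hb j).le).mul hrest⟩
  rw [(blaschkeFactor_eq_zero_iff (hb j) (hb j).le).2 rfl, zero_mul, add_zero]
  have hden := one_sub_conj_mul_ne_zero (hb j) (hb j).le
  refine mul_ne_zero (div_ne_zero hden (pow_ne_zero 2 hden))
    (Finset.prod_ne_zero_iff.2 fun i hi => ?_)
  rw [Ne, blaschkeFactor_eq_zero_iff (hb i) (hb j).le, hbinj.eq_iff]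
  exact Finset.ne_of_mem_erase hi

end Blaschke

theorem range_subset_ball_of_norm_lt_one {ι : Type*} {b : ι → ℂ} (hb : ∀ i, ‖b i‖ < 1) :
    range b ⊆ ball 0 1 :=
  range_subset_iff.2 fun i => mem_ball_zero_iff.2 (hb i)

namespace IsDiscMobius

variable {ι : Type*} [Fintype ι] {b : ι → ℂ} {f : ℂ → ℂ}

theorem eqOn_id_of_apply_eq (hb : ∀ i, ‖b i‖ < 1) (hbinj : Injective b) (hf : IsDiscMobius f)
    (hfB : EqOn (blaschkeProduct b ∘ f) (blaschkeProduct b) (ball 0 1)) {j : ι}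
    (hfix : f (b j) = b j) : EqOn f id (ball 0 1) := by
  classical
  obtain ⟨d, hd, hderiv⟩ := exists_hasDerivAt_blaschkeProduct_ne_zero hb hbinj j
  exact hf.eqOn_id_of_comp_eq_of_hasDerivAt (mem_ball_zero_iff.2 (hb j)) hfix hderiv hd hfB

theorem mapsTo_range (hb : ∀ i, ‖b i‖ < 1) (hf : IsDiscMobius f)
    (hfB : EqOn (blaschkeProduct b ∘ f) (blaschkeProduct b) (ball 0 1)) :
    MapsTo f (range b) (range b) := by
  rintro _ ⟨i, rfl⟩
  have hi := mem_ball_zero_iff.2 (hb i)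
  rw [← blaschkeProduct_eq_zero_iff hb (mem_ball_zero_iff.1 (hf.mapsTo hi)).le,
    ← comp_apply (f := blaschkeProduct b), hfB hi, blaschkeProduct_eq_zero_iff hb (hb i).le]
  exact mem_range_self i

theorem surjOn_range (hb : ∀ i, ‖b i‖ < 1) (hf : IsDiscMobius f)
    (hfB : EqOn (blaschkeProduct b ∘ f) (blaschkeProduct b) (ball 0 1)) :
    SurjOn f (range b) (range b) :=
  ((Finite.injOn_iff_bijOn_of_mapsTo (finite_range b) (hf.mapsTo_range hb hfB)).1
    (hf.injOn.mono (range_subset_ball_of_norm_lt_one hb))).surjOn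

theorem iterate_card_sub_one_apply_ne (hb : ∀ i, ‖b i‖ < 1) (hbinj : Injective b)
    (hf : IsDiscMobius f) (hfB : EqOn (blaschkeProduct b ∘ f) (blaschkeProduct b) (ball 0 1))
    (hne : ∃ z ∈ ball (0 : ℂ) 1, f z ≠ z) (j : ι) : f^[Fintype.card ι - 1] (b j) ≠ b j := by
  classical
  obtain ⟨z, hz, hfz⟩ := hne
  set T := Finset.univ.image b
  have hT : (T : Set ℂ) = range b := by simp [T]
  have hfree : ∀ k : ℕ, ∀ x ∈ T, f^[k] x = x → ∀ y ∈ T, f^[k] y = y := by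
    intro k x hx hkx y hy
    rw [← Finset.mem_coe, hT] at hx hy
    obtain ⟨i, rfl⟩ := hx
    exact (hf.iterate k).eqOn_id_of_apply_eq hb hbinj (eqOn_comp_iterate hf.mapsTo hfB k) hkx
      (range_subset_ball_of_norm_lt_one hb hy)
  intro hfix
  rw [← Finset.card_univ, ← Finset.card_image_of_injective _ hbinj] at hfix
  exact hfz (hf.eqOn_id_of_apply_eq hb hbinj hfB
    (apply_eq_of_iterate_card_sub_one_eq (hT ▸ hf.mapsTo_range hb hfB)
      (hT ▸ hf.injOn.mono (range_subset_ball_of_norm_lt_one hb)) hfree (by simp [T]) hfix) hz)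

end IsDiscMobius

theorem canonical_invariance_necessary_general (n : ℕ)
    (a : Fin (n - 1) → ℂ) (ha : ∀ k, ‖a k‖ < 1)
    (ha0 : ∀ k, a k ≠ 0) (hainj : Function.Injective a) (B : ℂ → ℂ)
    (hB : ∀ z, B z = z * ∏ k, (z - a k) / (1 - (starRingEnd ℂ) (a k) * z))
    (c α : ℂ) (hc : ‖c‖ = 1) (hα : ‖α‖ < 1) (M : ℂ → ℂ)
    (hM : ∀ z, M z = c * (z - α) / (1 - (starRingEnd ℂ) α * z))
    (hne : ∃ z ∈ Metric.ball (0 : ℂ) 1, M z ≠ z)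
    (hinv : ∀ z ∈ Metric.ball (0 : ℂ) 1, B (M z) = B z) :
    ∃ j l : Fin (n - 1), ‖a j‖ = ‖a l‖ ∧
      c = -(a j / a l) ∧ α = a l ∧ ∃ i : Fin (n - 1), M^[n - 1] 0 = a i := by
  set b : Option (Fin (n - 1)) → ℂ := fun o => o.elim 0 a
  have hb : ∀ i, ‖b i‖ < 1 := by rintro (_ | k) <;> simp [b, ha]
  have hbinj : Injective b := Option.injective_iff.2 ⟨hainj, by simpa [b, eq_comm] using ha0⟩
  have hrange : ∀ w ∈ range b, w ≠ 0 → ∃ k, a k = w := by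
    simp only [b, Option.range_elim, mem_insert_iff, mem_range]
    exact fun w hw hw0 => hw.resolve_left hw0
  have hMob : IsDiscMobius M := funext hM ▸ isDiscMobius_mul_div hc hα
  have hMB : EqOn (blaschkeProduct b ∘ M) (blaschkeProduct b) (ball 0 1) :=
    (funext fun z => (hB z).trans (blaschkeProduct_option_elim a z).symm : B = _) ▸ hinv
  have hM0 : M 0 = -(c * α) := by simp [hM]
  have hM0ne : M 0 ≠ 0 := fun h => by
    obtain ⟨z, hz, hMz⟩ := hne
    exact hMz (hMob.eqOn_id_of_apply_eq hb hbinj hMB (j := none) h hz)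
  obtain ⟨j, hj⟩ := hrange _ (hMob.mapsTo_range hb hMB ⟨none, rfl⟩) hM0ne
  replace hj : a j = -(c * α) := hj.trans hM0
  obtain ⟨w, hw, hMw⟩ := hMob.surjOn_range hb hMB ⟨none, rfl⟩
  have hαw : α = w := hMob.injOn (mem_ball_zero_iff.2 hα)
    (range_subset_ball_of_norm_lt_one hb hw) (by rw [hMw, hM]; simp [b])
  obtain ⟨l, hl⟩ := hrange w hw (hαw ▸ fun h => hM0ne (by simp [hM0, h]))
  refine ⟨j, l, ?_, ?_, hαw.trans hl.symm, ?_⟩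
  · rw [hj, norm_neg, norm_mul, hc, one_mul, hαw, hl]
  · rw [hj, hαw, ← hl, neg_div, mul_div_cancel_right₀ _ (ha0 l), neg_neg]
  · obtain ⟨i, hi⟩ := hrange _ ((hMob.mapsTo_range hb hMB).iterate (n - 1) ⟨none, rfl⟩)
      (by simpa [b] using hMob.iterate_card_sub_one_apply_ne hb hbinj hMB hne none)
    exact ⟨i, hi.symm⟩

/-- Necessary conditions on `M` for a canonical Blaschke product `B` of degree
`n` to satisfy `B ∘ M = B`: `M z = c (z - a_l)/(1 - conj a_l z)` with
`|a_j| = |a_l|`, `c = -a_j/a_l`, and `M^[n-1] 0` is a nonzero zero of `B`. -/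
theorem canonical_invariance_necessary (n : ℕ) (hn : 2 ≤ n)
    (a : Fin (n - 1) → ℂ) (ha : ∀ k, ‖a k‖ < 1)
    (ha0 : ∀ k, a k ≠ 0) (hainj : Function.Injective a) (B : ℂ → ℂ)
    (hB : ∀ z, B z = z * ∏ k, (z - a k) / (1 - (starRingEnd ℂ) (a k) * z))
    (c α : ℂ) (hc : ‖c‖ = 1) (hα : ‖α‖ < 1) (M : ℂ → ℂ)
    (hM : ∀ z, M z = c * (z - α) / (1 - (starRingEnd ℂ) α * z))
    (hne : ∃ z ∈ Metric.ball (0 : ℂ) 1, M z ≠ z)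
    (hinv : ∀ z ∈ Metric.ball (0 : ℂ) 1, B (M z) = B z) :
    ∃ j l : Fin (n - 1), ‖a j‖ = ‖a l‖ ∧
      c = -(a j / a l) ∧ α = a l ∧ ∃ i : Fin (n - 1), M^[n - 1] 0 = a i :=
  canonical_invariance_necessary_general n a ha ha0 hainj B hB c α hc hα M hM hne hinv
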